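/- In su(3) with the chain h = Δ_{1,-1}u(1) = span{i(F_{11} − F_{22})} ⊂ k = s(u(2)⊕u(1)) ⊂ su(3): the bracket of any two elements of m = k ⊖ h lies in h, i.e. [m,m] ⊆ h, so condition (*) holds for this chain. -/

import Mathlib

open Matrix

noncomputable section

/-- `E i j = e_{ij} - e_{ji}` in the complex `3 × 3` matrices (0-based
indices: `E i j` corresponds to the paper's `E_{(i+1)(j+1)}`). -/
def E (i j : Fin 3) : Matrix (Fin 3) (Fin 3) ℂ :=
  Matrix.single i j 1 - Matrix.single j i 1

/-- `F i j = e_{ij} + e_{ji}` for `i ≠ j`, and `F j j = e_{jj}`. -/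
def F (i j : Fin 3) : Matrix (Fin 3) (Fin 3) ℂ :=
  if i = j then Matrix.single i i 1
  else Matrix.single i j 1 + Matrix.single j i 1

/-- The biinvariant inner product `⟨A,B⟩ = -Re tr(AB)`. -/
def ip (A B : Matrix (Fin 3) (Fin 3) ℂ) : ℝ := - ((A * B).trace.re)

/-- The associated norm. -/
def nrm (A : Matrix (Fin 3) (Fin 3) ℂ) : ℝ := Real.sqrt (ip A A)

/-- Orthogonal complement (over `ℝ`) with respect to `ip`. -/
def perp (W : Submodule ℝ (Matrix (Fin 3) (Fin 3) ℂ)) :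
    Submodule ℝ (Matrix (Fin 3) (Fin 3) ℂ) where
  carrier := {v | ∀ w ∈ W, ip v w = 0}
  add_mem' := by
    intro a b ha hb w hw
    have h1 := ha w hw
    have h2 := hb w hw
    simp only [ip, Matrix.add_mul, Matrix.trace_add, Complex.add_re] at *
    linarith
  zero_mem' := by intro w hw; simp [ip]
  smul_mem' := by
    intro c a ha w hw
    have h1 := ha w hw
    have h2 : ((a * w).trace).re = 0 := by simp only [ip] at h1; linarith
    simp [ip, smul_mul_assoc, Matrix.trace_smul, Complex.real_smul, h2]

/-- The Lie algebra `su(3)` of traceless skew-hermitian matrices, as a real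
submodule. -/
def su3 : Submodule ℝ (Matrix (Fin 3) (Fin 3) ℂ) where
  carrier := {A | Aᴴ = -A ∧ A.trace = 0}
  add_mem' := by
    rintro a b ⟨ha1, ha2⟩ ⟨hb1, hb2⟩
    constructor
    · rw [Matrix.conjTranspose_add, ha1, hb1]; abel
    · rw [Matrix.trace_add, ha2, hb2]; ring
  zero_mem' := by simp
  smul_mem' := by
    rintro c a ⟨h1, h2⟩
    constructor
    · rw [Matrix.conjTranspose_smul, h1]
      simp
    · rw [Matrix.trace_smul, h2, smul_zero]

/-- The subalgebra `k = s(u(2)⊕u(1))` of `su(3)`: matrices in `su(3)` whose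
off-diagonal entries in the third row and column vanish. -/
def kSub : Submodule ℝ (Matrix (Fin 3) (Fin 3) ℂ) where
  carrier := {A | A ∈ su3 ∧ A 0 2 = 0 ∧ A 1 2 = 0 ∧ A 2 0 = 0 ∧ A 2 1 = 0}
  add_mem' := by
    rintro a b ⟨ha, ha1, ha2, ha3, ha4⟩ ⟨hb, hb1, hb2, hb3, hb4⟩
    exact ⟨su3.add_mem ha hb, by simp [Matrix.add_apply, ha1, hb1],
      by simp [Matrix.add_apply, ha2, hb2], by simp [Matrix.add_apply, ha3, hb3],
      by simp [Matrix.add_apply, ha4, hb4]⟩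
  zero_mem' := ⟨su3.zero_mem, by simp, by simp, by simp, by simp⟩
  smul_mem' := by
    rintro c a ⟨ha, ha1, ha2, ha3, ha4⟩
    exact ⟨su3.smul_mem c ha, by simp [Matrix.smul_apply, ha1],
      by simp [Matrix.smul_apply, ha2], by simp [Matrix.smul_apply, ha3],
      by simp [Matrix.smul_apply, ha4]⟩

/-- `P` is the orthogonal projection onto `m` with respect to `ip`. -/
def IsOrthProj (m : Submodule ℝ (Matrix (Fin 3) (Fin 3) ℂ))
    (P : Matrix (Fin 3) (Fin 3) ℂ →ₗ[ℝ] Matrix (Fin 3) (Fin 3) ℂ) : Prop :=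
  (∀ v, P v ∈ m) ∧ (∀ v ∈ m, P v = v) ∧ (∀ v, v - P v ∈ perp m)

/-- Condition (*) of Schwachhöfer–Tapp: there is `C > 0` with
`‖[Xᵐ,Yᵐ]ᵐ‖ ≤ C‖[X,Y]‖` for all `X, Y ∈ m ⊕ s`. -/
def CondStar (m s : Submodule ℝ (Matrix (Fin 3) (Fin 3) ℂ))
    (P : Matrix (Fin 3) (Fin 3) ℂ →ₗ[ℝ] Matrix (Fin 3) (Fin 3) ℂ) : Prop :=
  ∃ C > 0, ∀ X Y, X ∈ m ⊔ s → Y ∈ m ⊔ s →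
    nrm (P ⁅P X, P Y⁆) ≤ C * nrm ⁅X, Y⁆

private lemma ip_symm (A B : Matrix (Fin 3) (Fin 3) ℂ) : ip A B = ip B A := by
  unfold ip; rw [Matrix.trace_mul_comm]

private lemma ip_sub_left (A B W : Matrix (Fin 3) (Fin 3) ℂ) :
    ip (A - B) W = ip A W - ip B W := by
  unfold ip; rw [Matrix.sub_mul, Matrix.trace_sub, Complex.sub_re]; ring

/-- Structure of elements of `m`. -/
private lemma mem_m_struct (h m : Submodule ℝ (Matrix (Fin 3) (Fin 3) ℂ))
    (hh : h = Submodule.span ℝ {Complex.I • (F 0 0 - F 1 1)})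
    (hm : m = kSub ⊓ perp h) (X : Matrix (Fin 3) (Fin 3) ℂ) (hX : X ∈ m) :
    X 0 0 = X 1 1 ∧ X 1 0 = -(starRingEnd ℂ) (X 0 1) ∧
    X 0 2 = 0 ∧ X 1 2 = 0 ∧ X 2 0 = 0 ∧ X 2 1 = 0 := by
  rw [hm, Submodule.mem_inf] at hX
  obtain ⟨⟨⟨hsk, _⟩, h02, h12, h20, h21⟩, hperp⟩ := hX
  have hip : ip X (Complex.I • (F 0 0 - F 1 1)) = 0 := by
    apply hperp
    rw [hh]
    exact Submodule.mem_span_singleton_self _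
  have hent : ∀ i j : Fin 3, (starRingEnd ℂ) (X j i) = -(X i j) := by
    intro i j
    have := congrFun (congrFun hsk i) j
    simpa [Matrix.conjTranspose_apply] using this
  have hre0 : (X 0 0).re = 0 := by
    have := congrArg Complex.re (hent 0 0)
    simp at this; linarith
  have hre1 : (X 1 1).re = 0 := by
    have := congrArg Complex.re (hent 1 1)
    simp at this; linarith
  have him : (X 0 0).im = (X 1 1).im := by
    simp only [ip, Matrix.trace, Matrix.diag, Matrix.mul_apply, Fin.sum_univ_three,
      Matrix.smul_apply, Matrix.sub_apply, F, Matrix.single] at hip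
    norm_num at hip
    simp [Complex.mul_re, Complex.I_re, Complex.I_im] at hip
    linarith
  refine ⟨Complex.ext (by rw [hre0, hre1]) him, ?_, h02, h12, h20, h21⟩
  have h' := congrArg (starRingEnd ℂ) (hent 0 1)
  rw [map_neg] at h'
  simpa using h'

/-- `[m, m] ⊆ h`. -/
private lemma bracket_mem (h m : Submodule ℝ (Matrix (Fin 3) (Fin 3) ℂ))
    (hh : h = Submodule.span ℝ {Complex.I • (F 0 0 - F 1 1)})
    (hm : m = kSub ⊓ perp h) :
    ∀ X ∈ m, ∀ Y ∈ m, (⁅X, Y⁆ : Matrix (Fin 3) (Fin 3) ℂ) ∈ h := by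
  intro X hX Y hY
  obtain ⟨hX00, hX10, hX02, hX12, hX20, hX21⟩ := mem_m_struct h m hh hm X hX
  obtain ⟨hY00, hY10, hY02, hY12, hY20, hY21⟩ := mem_m_struct h m hh hm Y hY
  rw [hh, Submodule.mem_span_singleton]
  refine ⟨2 * ((starRingEnd ℂ) (X 0 1) * Y 0 1).im, ?_⟩
  have key : ∀ z : ℂ, z - (starRingEnd ℂ) z = (2 * z.im : ℝ) * Complex.I := by
    intro z; simpa using Complex.sub_conj z
  ext i j
  rw [Ring.lie_def]
  fin_cases i <;> fin_cases j <;>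
    simp [Matrix.mul_apply, Fin.sum_univ_three, F, Matrix.single,
      hX00, hX10, hX02, hX12, hX20, hX21, hY00, hY10, hY02, hY12, hY20, hY21,
      Complex.real_smul] <;>
  · apply Complex.ext <;>
      simp [Complex.add_re, Complex.add_im, Complex.mul_re, Complex.mul_im,
        Complex.sub_re, Complex.sub_im] <;>
      ring
/-- In `su(3)` with the chain `h = Δ_{1,−1}u(1) = span{i(F₁₁ − F₂₂)} ⊂
k = s(u(2)⊕u(1)) ⊂ su(3)`: the bracket of any two elements of `m = k ⊖ h`
lies in `h`, i.e. `[m,m] ⊆ h`, so condition (*) holds for this chain. -/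
theorem stmt6 (h m s : Submodule ℝ (Matrix (Fin 3) (Fin 3) ℂ))
    (hh : h = Submodule.span ℝ {Complex.I • (F 0 0 - F 1 1)})
    (hm : m = kSub ⊓ perp h) (hs : s = su3 ⊓ perp kSub)
    (P : Matrix (Fin 3) (Fin 3) ℂ →ₗ[ℝ] Matrix (Fin 3) (Fin 3) ℂ)
    (hP : IsOrthProj m P) :
    (∀ X ∈ m, ∀ Y ∈ m, (⁅X, Y⁆ : Matrix (Fin 3) (Fin 3) ℂ) ∈ h) ∧
    CondStar m s P := by
  have hbr := bracket_mem h m hh hm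
  refine ⟨hbr, 1, one_pos, ?_⟩
  intro X Y _ _
  obtain ⟨hPmem, hPid, hPperp⟩ := hP
  set v : Matrix (Fin 3) (Fin 3) ℂ := ⁅P X, P Y⁆ with hv
  have hvh : v ∈ h := hbr _ (hPmem X) _ (hPmem Y)
  have hw : ip (P v) (P v) = 0 := by
    have h1 : ip (v - P v) (P v) = 0 := hPperp v (P v) (hPmem v)
    have h2 : ip v (P v) = 0 := by
      rw [ip_symm]
      have : P v ∈ perp h := by
        have := hPmem v
        rw [hm, Submodule.mem_inf] at this
        exact this.2
      exact this v hvh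
    have := ip_sub_left v (P v) (P v)
    rw [h1, h2] at this
    linarith
  have : nrm (P v) = 0 := by rw [nrm, hw, Real.sqrt_zero]
  rw [this, one_mul]
  exact Real.sqrt_nonneg _
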